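/- arXiv:2503.19701 — 4 statements merged into one kernel-verified Lean document; each statement's English description precedes it below -/
import Mathlib

section
/- Let ι be a type, S a finite set of indices, M ⊆ S, and let o, o' : ι → ℝ be functions with o i ≥ 0 and o' i ≥ 0 for all i ∈ S. Let 0 < γ₀ < 1 and 0 < θ₀ < 1. Assume: (i) ∑_{i ∈ M} (o i)² ≥ θ₀² · ∑_{i ∈ S} (o i)² (Dörfler marking); (ii) o' i ≤ γ₀ · o i for every i ∈ M; (iii) o' i ≤ o i for every i ∈ S \ M. Then ∑_{i ∈ S} (o' i)² ≤ (1 - (1 - γ₀²)·θ₀²) · ∑_{i ∈ S} (o i)², i.e., the new total oscillation satisfies (∑_{S} (o')²)^{1/2} ≤ ζ · (∑_{S} o²)^{1/2} with ζ = √(1 - (1 - γ₀²)θ₀²). -/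
/-! Squaring the pointwise bounds, the marked part of the sum shrinks by the factor `γ₀²`, so the
total drops by at least `(1 - γ₀²) ∑_M o²`, which Dörfler marking bounds below by
`(1 - γ₀²) θ₀² ∑_S o²`. -/

theorem Finset.sum_sq_le_sum_sq {ι R : Type*} [Semiring R] [PartialOrder R] [IsOrderedRing R]
    {s : Finset ι} {f g : ι → R}
    (hf : ∀ i ∈ s, 0 ≤ f i) (hfg : ∀ i ∈ s, f i ≤ g i) :
    ∑ i ∈ s, f i ^ 2 ≤ ∑ i ∈ s, g i ^ 2 :=
  Finset.sum_le_sum fun i hi => pow_le_pow_left₀ (hf i hi) (hfg i hi) 2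

theorem Finset.sum_sq_le_sub_of_le_mul_on_subset {ι R : Type*} [DecidableEq ι]
    [CommRing R] [LinearOrder R] [IsStrictOrderedRing R]
    {S M : Finset ι} (hMS : M ⊆ S) {o o' : ι → R} {γ : R}
    (ho' : ∀ i ∈ S, 0 ≤ o' i) (hred : ∀ i ∈ M, o' i ≤ γ * o i)
    (hmono : ∀ i ∈ S \ M, o' i ≤ o i) :
    ∑ i ∈ S, o' i ^ 2 ≤ ∑ i ∈ S, o i ^ 2 - (1 - γ ^ 2) * ∑ i ∈ M, o i ^ 2 := by
  have hM : ∑ i ∈ M, o' i ^ 2 ≤ γ ^ 2 * ∑ i ∈ M, o i ^ 2 := by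
    simpa only [mul_pow, Finset.mul_sum] using
      Finset.sum_sq_le_sum_sq (fun i hi => ho' i (hMS hi)) hred
  have hSM : ∑ i ∈ S \ M, o' i ^ 2 ≤ ∑ i ∈ S \ M, o i ^ 2 :=
    Finset.sum_sq_le_sum_sq (fun i hi => ho' i (Finset.mem_sdiff.mp hi).1) hmono
  rw [← Finset.sum_sdiff hMS (f := fun i => o' i ^ 2),
    ← Finset.sum_sdiff hMS (f := fun i => o i ^ 2)]
  linarith

theorem oscillation_reduction_general
    {ι : Type*} [DecidableEq ι] (S M : Finset ι) (hMS : M ⊆ S)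
    (o o' : ι → ℝ)
    (ho' : ∀ i ∈ S, 0 ≤ o' i)
    (γ₀ θ₀ : ℝ) (hγ₀0 : 0 < γ₀) (hγ₀1 : γ₀ < 1)
    (hmark : θ₀ ^ 2 * ∑ i ∈ S, (o i) ^ 2 ≤ ∑ i ∈ M, (o i) ^ 2)
    (hred : ∀ i ∈ M, o' i ≤ γ₀ * o i)
    (hmono : ∀ i ∈ S \ M, o' i ≤ o i) :
    ∑ i ∈ S, (o' i) ^ 2 ≤ (1 - (1 - γ₀ ^ 2) * θ₀ ^ 2) * ∑ i ∈ S, (o i) ^ 2 := by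
  have hreduced := Finset.sum_sq_le_sub_of_le_mul_on_subset hMS ho' hred hmono
  have hγ₀sq : 0 ≤ 1 - γ₀ ^ 2 := by nlinarith
  linarith [mul_le_mul_of_nonneg_left hmark hγ₀sq]

/-- Oscillation reduction: Dörfler marking for the oscillation together with a
size reduction factor `γ₀` on marked elements reduces the total (squared)
oscillation by the factor `1 - (1 - γ₀²)·θ₀²`. -/
theorem oscillation_reduction
    {ι : Type*} [DecidableEq ι] (S M : Finset ι) (hMS : M ⊆ S)
    (o o' : ι → ℝ)
    (ho : ∀ i ∈ S, 0 ≤ o i) (ho' : ∀ i ∈ S, 0 ≤ o' i)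
    (γ₀ θ₀ : ℝ) (hγ₀0 : 0 < γ₀) (hγ₀1 : γ₀ < 1) (hθ₀0 : 0 < θ₀) (hθ₀1 : θ₀ < 1)
    (hmark : θ₀ ^ 2 * ∑ i ∈ S, (o i) ^ 2 ≤ ∑ i ∈ M, (o i) ^ 2)
    (hred : ∀ i ∈ M, o' i ≤ γ₀ * o i)
    (hmono : ∀ i ∈ S \ M, o' i ≤ o i) :
    ∑ i ∈ S, (o' i) ^ 2 ≤ (1 - (1 - γ₀ ^ 2) * θ₀ ^ 2) * ∑ i ∈ S, (o i) ^ 2 :=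
  oscillation_reduction_general S M hMS o o' ho' γ₀ θ₀ hγ₀0 hγ₀1 hmark hred hmono
end

section
/- Let a ≥ 0 and ζ > 0 be real numbers with ζ² ≠ a, and set δ = max(√a, ζ). Let (e_k) and (o_k) be sequences of nonnegative real numbers such that for all k: e_{k+1}² ≤ a · e_k² + o_k² and o_{k+1} ≤ ζ · o_k. Then for every k ≥ 0, e_k ≤ δ^k · √(e₀² + o₀² / |ζ² - a|). -/
/-- Geometric decay for the error recursion in the nondegenerate case `ζ² ≠ a`,
with overall rate `δ = max (√a) ζ`. -/
theorem error_recursion_geometric_decay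
    (a ζ : ℝ) (ha : 0 ≤ a) (hζ : 0 < ζ) (hne : ζ ^ 2 ≠ a)
    (e o : ℕ → ℝ) (he : ∀ k, 0 ≤ e k) (ho : ∀ k, 0 ≤ o k)
    (hrec : ∀ k, (e (k + 1)) ^ 2 ≤ a * (e k) ^ 2 + (o k) ^ 2)
    (hosc : ∀ k, o (k + 1) ≤ ζ * o k) :
    ∀ k, e k ≤ (max (Real.sqrt a) ζ) ^ k *
      Real.sqrt ((e 0) ^ 2 + (o 0) ^ 2 / |ζ ^ 2 - a|) := by
  set s := ζ ^ 2 with hs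
  have hs0 : 0 < s := by positivity
  have hd : a - s ≠ 0 := fun h => hne (by linarith [sub_eq_zero.mp h])
  -- oscillation bound
  have hok : ∀ k, o k ≤ ζ ^ k * o 0 := by
    intro k
    induction k with
    | zero => simp
    | succ n ih =>
      calc o (n + 1) ≤ ζ * o n := hosc n
        _ ≤ ζ * (ζ ^ n * o 0) := by
            exact mul_le_mul_of_nonneg_left ih hζ.le
        _ = ζ ^ (n + 1) * o 0 := by ring
  -- squared oscillation bound
  have hok2 : ∀ k, (o k) ^ 2 ≤ s ^ k * (o 0) ^ 2 := by
    intro k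
    have h1 : (o k) ^ 2 ≤ (ζ ^ k * o 0) ^ 2 := by
      have := hok k
      nlinarith [ho k, ho 0, pow_nonneg hζ.le k]
    calc (o k) ^ 2 ≤ (ζ ^ k * o 0) ^ 2 := h1
      _ = s ^ k * (o 0) ^ 2 := by rw [hs]; ring
  -- main squared recursion bound
  have hek : ∀ k, (e k) ^ 2 ≤ a ^ k * (e 0) ^ 2 + (o 0) ^ 2 * (a ^ k - s ^ k) / (a - s) := by
    intro k
    induction k with
    | zero => simp
    | succ n ih =>
      have key : a * (a ^ n * (e 0) ^ 2 + (o 0) ^ 2 * (a ^ n - s ^ n) / (a - s))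
          + s ^ n * (o 0) ^ 2
          = a ^ (n + 1) * (e 0) ^ 2 + (o 0) ^ 2 * (a ^ (n + 1) - s ^ (n + 1)) / (a - s) := by
        field_simp
        ring
      calc (e (n + 1)) ^ 2 ≤ a * (e n) ^ 2 + (o n) ^ 2 := hrec n
        _ ≤ a * (a ^ n * (e 0) ^ 2 + (o 0) ^ 2 * (a ^ n - s ^ n) / (a - s))
            + s ^ n * (o 0) ^ 2 := by
            have := mul_le_mul_of_nonneg_left ih ha
            linarith [hok2 n]
        _ = _ := key
  intro k
  set δ := max (Real.sqrt a) ζ with hδ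
  set C := (e 0) ^ 2 + (o 0) ^ 2 / |s - a| with hC
  have hδ0 : 0 ≤ δ := le_trans hζ.le (le_max_right _ _)
  have hC0 : 0 ≤ C := by positivity
  -- reduce to squared bound
  suffices h : (e k) ^ 2 ≤ (δ ^ 2) ^ k * C by
    have h1 : e k = Real.sqrt ((e k) ^ 2) := (Real.sqrt_sq (he k)).symm
    rw [h1]
    have h2 : Real.sqrt ((e k) ^ 2) ≤ Real.sqrt ((δ ^ 2) ^ k * C) := Real.sqrt_le_sqrt h
    have h3 : Real.sqrt ((δ ^ 2) ^ k * C) = δ ^ k * Real.sqrt C := by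
      rw [Real.sqrt_mul (by positivity), ← pow_mul, mul_comm 2 k, pow_mul,
        Real.sqrt_sq (by positivity)]
    rw [h3] at h2
    exact h2
  -- bound δ²
  have hδa : a ≤ δ ^ 2 := by
    have : Real.sqrt a ≤ δ := le_max_left _ _
    nlinarith [Real.sq_sqrt ha, Real.sqrt_nonneg a]
  have hδs : s ≤ δ ^ 2 := by
    have : ζ ≤ δ := le_max_right _ _
    nlinarith
  have hδ2 : 0 ≤ δ ^ 2 := by positivity
  have hpa : a ^ k ≤ (δ ^ 2) ^ k := pow_le_pow_left₀ ha hδa k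
  have hps : s ^ k ≤ (δ ^ 2) ^ k := pow_le_pow_left₀ hs0.le hδs k
  have hek' := hek k
  have ho2 : 0 ≤ (o 0) ^ 2 := by positivity
  rcases lt_or_gt_of_ne hd with hlt | hgt
  · -- a < s
    have hpos : (0:ℝ) < s - a := by linarith
    have habs : |s - a| = s - a := abs_of_pos hpos
    have heq : (o 0) ^ 2 * (a ^ k - s ^ k) / (a - s) = (o 0) ^ 2 * (s ^ k - a ^ k) / (s - a) := by
      rw [div_eq_div_iff hd (by linarith)]; ring
    have hfrac : (o 0) ^ 2 * (a ^ k - s ^ k) / (a - s)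
        ≤ (o 0) ^ 2 * (δ ^ 2) ^ k / (s - a) := by
      rw [heq]
      have hak : 0 ≤ a ^ k := pow_nonneg ha k
      have hnum : (o 0) ^ 2 * (s ^ k - a ^ k) ≤ (o 0) ^ 2 * (δ ^ 2) ^ k := by
        nlinarith [mul_le_mul_of_nonneg_left hps ho2, mul_nonneg ho2 hak]
      exact div_le_div_of_nonneg_right hnum hpos.le |>.trans_eq rfl
    calc (e k) ^ 2 ≤ a ^ k * (e 0) ^ 2 + (o 0) ^ 2 * (a ^ k - s ^ k) / (a - s) := hek'
      _ ≤ (δ ^ 2) ^ k * (e 0) ^ 2 + (o 0) ^ 2 * (δ ^ 2) ^ k / (s - a) := by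
          have := mul_le_mul_of_nonneg_right hpa (sq_nonneg (e 0))
          linarith [hfrac]
      _ = (δ ^ 2) ^ k * C := by rw [hC, habs]; ring
  · -- s < a
    have hpos : (0:ℝ) < a - s := by linarith
    have habs : |s - a| = a - s := by
      rw [abs_of_neg (show s - a < 0 by linarith)]; ring
    have hfrac : (o 0) ^ 2 * (a ^ k - s ^ k) / (a - s)
        ≤ (o 0) ^ 2 * (δ ^ 2) ^ k / (a - s) := by
      have hsk : 0 ≤ s ^ k := pow_nonneg hs0.le k
      have hnum : (o 0) ^ 2 * (a ^ k - s ^ k) ≤ (o 0) ^ 2 * (δ ^ 2) ^ k := by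
        nlinarith [mul_le_mul_of_nonneg_left hpa ho2, mul_nonneg ho2 hsk]
      exact div_le_div_of_nonneg_right hnum hpos.le |>.trans_eq rfl
    calc (e k) ^ 2 ≤ a ^ k * (e 0) ^ 2 + (o 0) ^ 2 * (a ^ k - s ^ k) / (a - s) := hek'
      _ ≤ (δ ^ 2) ^ k * (e 0) ^ 2 + (o 0) ^ 2 * (δ ^ 2) ^ k / (a - s) := by
          have := mul_le_mul_of_nonneg_right hpa (sq_nonneg (e 0))
          linarith [hfrac]
      _ = (δ ^ 2) ^ k * C := by rw [hC, habs]; ring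
end

section
/- Let a ≥ 0 and ζ > 0 be real numbers, and set δ = max(√a, ζ) (so δ > 0). Let (e_k) and (o_k) be sequences of nonnegative real numbers such that for all k: e_{k+1}² ≤ a · e_k² + o_k² and o_{k+1} ≤ ζ · o_k. Then for every k ≥ 0, e_k ≤ √(k+1) · δ^k · √(e₀² + o₀² / δ²). -/
/-!
Put `δ = max (√a) ζ`, so that `a ≤ δ²` and `o k ≤ ζ ^ k * o 0 ≤ δ ^ k * o 0`. The squared errors
`x k = e k ^ 2` then satisfy `x (k + 1) ≤ δ² * x k + (δ²) ^ (k + 1) * (o 0 ^ 2 / δ²)`. In such a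
recursion the forcing term decays at the same rate `b = δ²` as the contraction, so each step adds
one more copy of it: `x k ≤ b ^ k * (x 0 + k * c)`, which is where the factor `k + 1` comes from.
-/

theorem le_pow_mul_add_of_le_mul_add_pow_succ {x : ℕ → ℝ} {b c : ℝ} (hb : 0 ≤ b)
    (h : ∀ k, x (k + 1) ≤ b * x k + b ^ (k + 1) * c) (k : ℕ) :
    x k ≤ b ^ k * (x 0 + k * c) := by
  induction k with
  | zero => simp
  | succ k ih =>
    calc x (k + 1) ≤ b * (b ^ k * (x 0 + k * c)) + b ^ (k + 1) * c := (h k).trans (by gcongr)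
      _ = b ^ (k + 1) * (x 0 + (k + 1 : ℕ) * c) := by push_cast; ring

theorem Real.le_max_sqrt_sq (a ζ : ℝ) : a ≤ max (√a) ζ ^ 2 :=
  calc a ≤ max a 0 := le_max_left _ _
    _ = √a ^ 2 := Real.sq_sqrt'.symm
    _ ≤ max (√a) ζ ^ 2 := by gcongr; exact le_max_left _ _

theorem sq_le_pow_mul_sq_of_le_mul {o : ℕ → ℝ} {ζ δ : ℝ} (hζ : 0 ≤ ζ) (hζδ : ζ ≤ δ)
    (ho : ∀ k, 0 ≤ o k) (hosc : ∀ k, o (k + 1) ≤ ζ * o k) (k : ℕ) :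
    o k ^ 2 ≤ (δ ^ 2) ^ k * o 0 ^ 2 := by
  have ho0 := ho 0
  calc o k ^ 2 ≤ (ζ ^ k * o 0) ^ 2 := by
        gcongr
        exacts [ho k, le_geom hζ k fun j _ => hosc j]
    _ ≤ (δ ^ k * o 0) ^ 2 := by gcongr
    _ = (δ ^ 2) ^ k * o 0 ^ 2 := by ring

theorem le_sqrt_succ_mul_pow_mul_sqrt_add {x r s t : ℝ} {k : ℕ} (hr : 0 ≤ r) (hs : 0 ≤ s)
    (ht : 0 ≤ t) (h : x ^ 2 ≤ (r ^ 2) ^ k * (s + k * t)) :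
    x ≤ √(k + 1) * r ^ k * √(s + t) := by
  have hk : (0 : ℝ) ≤ k := k.cast_nonneg
  calc x ≤ √((k + 1) * (r ^ k) ^ 2 * (s + t)) := by
        refine Real.le_sqrt_of_sq_le (h.trans ?_)
        calc (r ^ 2) ^ k * (s + k * t) ≤ (r ^ 2) ^ k * ((k + 1) * (s + t)) := by
              gcongr; nlinarith [mul_nonneg hk hs]
          _ = (k + 1) * (r ^ k) ^ 2 * (s + t) := by ring
    _ = √(k + 1) * r ^ k * √(s + t) := by
        rw [Real.sqrt_mul (by positivity), Real.sqrt_mul (by positivity),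
          Real.sqrt_sq (by positivity)]

theorem error_recursion_geometric_decay_general_general
    (a ζ : ℝ) (hζ : 0 < ζ)
    (e o : ℕ → ℝ) (ho : ∀ k, 0 ≤ o k)
    (hrec : ∀ k, (e (k + 1)) ^ 2 ≤ a * (e k) ^ 2 + (o k) ^ 2)
    (hosc : ∀ k, o (k + 1) ≤ ζ * o k) :
    ∀ k, e k ≤ Real.sqrt (k + 1) * (max (Real.sqrt a) ζ) ^ k *
      Real.sqrt ((e 0) ^ 2 + (o 0) ^ 2 / (max (Real.sqrt a) ζ) ^ 2) := by
  intro k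
  set δ := max (Real.sqrt a) ζ
  have hδ : 0 < δ := hζ.trans_le (le_max_right _ _)
  have ho_sq : ∀ k, o k ^ 2 ≤ (δ ^ 2) ^ (k + 1) * (o 0 ^ 2 / δ ^ 2) := fun k => by
    calc o k ^ 2 ≤ (δ ^ 2) ^ k * o 0 ^ 2 :=
          sq_le_pow_mul_sq_of_le_mul hζ.le (le_max_right _ _) ho hosc k
      _ = (δ ^ 2) ^ (k + 1) * (o 0 ^ 2 / δ ^ 2) := by field_simp; ring
  have he_sq : ∀ k, e (k + 1) ^ 2 ≤ δ ^ 2 * e k ^ 2 + (δ ^ 2) ^ (k + 1) * (o 0 ^ 2 / δ ^ 2) :=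
    fun k => by
      have := mul_le_mul_of_nonneg_right (Real.le_max_sqrt_sq a ζ) (sq_nonneg (e k))
      linarith [hrec k, ho_sq k]
  exact le_sqrt_succ_mul_pow_mul_sqrt_add hδ.le (sq_nonneg _) (by positivity)
    (le_pow_mul_add_of_le_mul_add_pow_succ (x := fun k => e k ^ 2) (by positivity) he_sq k)

/-- Geometric decay (with a polynomial factor, covering the degenerate case
`ζ² = a`) for the error recursion, with overall rate `δ = max (√a) ζ`. -/
theorem error_recursion_geometric_decay_general
    (a ζ : ℝ) (ha : 0 ≤ a) (hζ : 0 < ζ)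
    (e o : ℕ → ℝ) (he : ∀ k, 0 ≤ e k) (ho : ∀ k, 0 ≤ o k)
    (hrec : ∀ k, (e (k + 1)) ^ 2 ≤ a * (e k) ^ 2 + (o k) ^ 2)
    (hosc : ∀ k, o (k + 1) ≤ ζ * o k) :
    ∀ k, e k ≤ Real.sqrt (k + 1) * (max (Real.sqrt a) ζ) ^ k *
      Real.sqrt ((e 0) ^ 2 + (o 0) ^ 2 / (max (Real.sqrt a) ζ) ^ 2) :=
  error_recursion_geometric_decay_general_general a ζ hζ e o ho hrec hosc
end

section
/- Let H be a real inner product space, u ∈ H, and let (u_k) be a sequence in H. Let δ₁ ∈ (0,1), ζ ∈ (0,1) with ζ² ≠ 1 - δ₁, set δ = max(√(1-δ₁), ζ), and let (o_k) be a sequence of nonnegative real numbers. Assume for every k: (i) ⟨u - u_{k+1}, u_{k+1} - u_k⟩ = 0; (ii) ‖u_{k+1} - u_k‖² ≥ δ₁ · ‖u - u_k‖² - o_k²; (iii) o_{k+1} ≤ ζ · o_k. Then for every k ≥ 0, ‖u - u_k‖ ≤ δ^k · √(‖u - u₀‖² + o₀² / |ζ² - (1 - δ₁)|). -/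
open scoped RealInnerProductSpace

/-- Abstract form of the convergence theorem for the adaptive finite element
algorithm: Galerkin orthogonality, the estimator-based lower bound, and
oscillation reduction imply geometric decay of the energy error with rate
`δ = max (√(1-δ₁)) ζ`. -/
theorem adaptive_fem_convergence
    {H : Type*} [NormedAddCommGroup H] [InnerProductSpace ℝ H]
    (u : H) (us : ℕ → H) (δ₁ ζ : ℝ)
    (hδ₁ : δ₁ ∈ Set.Ioo (0 : ℝ) 1) (hζ : ζ ∈ Set.Ioo (0 : ℝ) 1)
    (hne : ζ ^ 2 ≠ 1 - δ₁)
    (o : ℕ → ℝ) (ho : ∀ k, 0 ≤ o k)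
    (horth : ∀ k, ⟪u - us (k + 1), us (k + 1) - us k⟫ = 0)
    (hlow : ∀ k, δ₁ * ‖u - us k‖ ^ 2 - (o k) ^ 2 ≤ ‖us (k + 1) - us k‖ ^ 2)
    (hosc : ∀ k, o (k + 1) ≤ ζ * o k) :
    ∀ k, ‖u - us k‖ ≤ (max (Real.sqrt (1 - δ₁)) ζ) ^ k *
      Real.sqrt (‖u - us 0‖ ^ 2 + (o 0) ^ 2 / |ζ ^ 2 - (1 - δ₁)|) := by
  obtain ⟨hδ0, hδlt⟩ := hδ₁
  obtain ⟨hζ0, hζlt⟩ := hζ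
  set α : ℝ := 1 - δ₁ with hα
  set β : ℝ := ζ ^ 2 with hβ
  have hα0 : 0 ≤ α := by simp [hα]; linarith
  have hβ0 : 0 < β := by positivity
  have hne' : α ≠ β := fun h => hne (h.symm)
  set e : ℕ → ℝ := fun k => ‖u - us k‖ ^ 2 with he
  have he0 : ∀ k, 0 ≤ e k := fun k => by positivity
  have hstep : ∀ k, e (k + 1) ≤ α * e k + (o k) ^ 2 := by
    intro k
    have hpy : ‖u - us k‖ ^ 2 = ‖u - us (k + 1)‖ ^ 2 + ‖us (k + 1) - us k‖ ^ 2 := by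
      have h := norm_add_sq_real (u - us (k + 1)) (us (k + 1) - us k)
      have hsum : (u - us (k + 1)) + (us (k + 1) - us k) = u - us k := by abel
      rw [hsum, horth k] at h
      linarith
    have hl := hlow k
    simp only [he, hα]
    nlinarith
  have hoscn : ∀ k, (o k) ^ 2 ≤ β ^ k * (o 0) ^ 2 := by
    intro k
    induction k with
    | zero => simp
    | succ n ih =>
      have h1 := hosc n
      have h0 := ho n
      have h0' := ho (n + 1)
      have hbn : 0 ≤ β ^ n := by positivity
      calc (o (n + 1)) ^ 2 ≤ β * (o n) ^ 2 := by nlinarith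
        _ ≤ β * (β ^ n * (o 0) ^ 2) := by nlinarith
        _ = β ^ (n + 1) * (o 0) ^ 2 := by ring
  set C : ℝ := (o 0) ^ 2 / (α - β) with hC
  have hCid : C * (α - β) = (o 0) ^ 2 :=
    div_mul_cancel₀ _ (sub_ne_zero.mpr hne')
  have hmain : ∀ k, e k ≤ α ^ k * e 0 + C * (α ^ k - β ^ k) := by
    intro k
    induction k with
    | zero => simp
    | succ n ih =>
      have h1 := hstep n
      have h2 := hoscn n
      calc e (n + 1) ≤ α * e n + (o n) ^ 2 := h1
        _ ≤ α * (α ^ n * e 0 + C * (α ^ n - β ^ n)) + β ^ n * (o 0) ^ 2 := by nlinarith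
        _ = α ^ (n + 1) * e 0 + C * (α ^ (n + 1) - β ^ (n + 1)) := by
            rw [← hCid]; ring
  intro k
  set δ : ℝ := max (Real.sqrt α) ζ with hδ
  have hδ0' : 0 ≤ δ := le_trans (Real.sqrt_nonneg α) (le_max_left _ _)
  have hδsq : δ ^ 2 = max α β := by
    rcases le_total (Real.sqrt α) ζ with h | h
    · rw [hδ, max_eq_right h, max_eq_right]
      have := Real.sqrt_le_sqrt hα0
      nlinarith [Real.sq_sqrt hα0, Real.sqrt_nonneg α]
    · rw [hδ, max_eq_left h, Real.sq_sqrt hα0, max_eq_left]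
      nlinarith [Real.sq_sqrt hα0, Real.sqrt_nonneg α]
  set M : ℝ := max α β with hM
  have hM0 : 0 ≤ M := le_trans hα0 (le_max_left _ _)
  have hαM : ∀ n : ℕ, α ^ n ≤ M ^ n := fun n => pow_le_pow_left₀ hα0 (le_max_left _ _) n
  have hβM : ∀ n : ℕ, β ^ n ≤ M ^ n := fun n => pow_le_pow_left₀ hβ0.le (le_max_right _ _) n
  have habs : |α ^ k - β ^ k| ≤ M ^ k := by
    rw [abs_sub_le_iff]
    constructor
    · have : 0 ≤ β ^ k := by positivity
      linarith [hαM k]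
    · have : 0 ≤ α ^ k := by positivity
      linarith [hβM k]
  have hCabs : |C| = (o 0) ^ 2 / |α - β| := by
    rw [hC, abs_div, abs_of_nonneg (by positivity : (0:ℝ) ≤ (o 0) ^ 2)]
  set D : ℝ := e 0 + (o 0) ^ 2 / |β - α| with hD
  have hD' : D = e 0 + |C| := by
    rw [hD, hCabs, abs_sub_comm]
  have hD0 : 0 ≤ D := by
    rw [hD']
    positivity
  have hek : e k ≤ M ^ k * D := by
    have h1 := hmain k
    have h2 : C * (α ^ k - β ^ k) ≤ |C| * M ^ k := by
      calc C * (α ^ k - β ^ k) ≤ |C * (α ^ k - β ^ k)| := le_abs_self _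
        _ = |C| * |α ^ k - β ^ k| := abs_mul _ _
        _ ≤ |C| * M ^ k := by
            have := abs_nonneg C
            nlinarith
    have h3 : α ^ k * e 0 ≤ M ^ k * e 0 := by nlinarith [hαM k, he0 0]
    calc e k ≤ α ^ k * e 0 + C * (α ^ k - β ^ k) := h1
      _ ≤ M ^ k * e 0 + |C| * M ^ k := by linarith
      _ = M ^ k * D := by rw [hD']; ring
  have hnorm : ‖u - us k‖ = Real.sqrt (e k) := by
    rw [he]
    exact (Real.sqrt_sq (norm_nonneg _)).symm
  rw [hnorm]
  have hgoal : Real.sqrt (e k) ≤ Real.sqrt (M ^ k * D) :=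
    Real.sqrt_le_sqrt hek
  have heq : Real.sqrt (M ^ k * D) = δ ^ k * Real.sqrt D := by
    rw [Real.sqrt_mul (by positivity) D, ← hδsq, ← pow_mul, mul_comm 2 k, pow_mul,
      Real.sqrt_sq (pow_nonneg hδ0' k)]
  exact hgoal.trans (le_of_eq heq)
end
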